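/- Let f : X → Y be a Reedy fibration between marked bisimplicial sets such that the marking on X respects path components, and let u : A → A' be a morphism of marked simplicial sets whose underlying morphism of simplicial sets is a monomorphism. Then the induced map ⟨u \ f⟩ : A' \ X → A \ X ×_{A \ Y} A' \ Y is a Kan fibration. -/

import Mathlib

set_option linter.unusedVariables false

open CategoryTheory CategoryTheory.Limits Simplicial Opposite

namespace Paper

abbrev BSSet : Type 1 := SimplexCategoryᵒᵖ × SimplexCategoryᵒᵖ ⥤ Type

@[simps]
def boxObj (A B : SSet.{0}) : BSSet where
  obj p := A.obj p.1 × B.obj p.2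
  map f := TypeCat.ofHom fun x => (A.map f.1 x.1, B.map f.2 x.2)
  map_id p := by ext x <;> simp
  map_comp f g := by ext x <;> simp

@[simps]
def boxMap {A A' B B' : SSet.{0}} (u : A ⟶ A') (v : B ⟶ B') :
    boxObj A B ⟶ boxObj A' B' where
  app p := TypeCat.ofHom fun x => (u.app p.1 x.1, v.app p.2 x.2)
  naturality p q φ := by
    ext x : 3
    change (u.app q.1 (A.map φ.1 x.1), v.app q.2 (B.map φ.2 x.2)) =
      (A'.map φ.1 (u.app p.1 x.1), B'.map φ.2 (v.app p.2 x.2))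
    rw [NatTrans.naturality_apply, NatTrans.naturality_apply]

lemma boxMap_id (A B : SSet.{0}) : boxMap (𝟙 A) (𝟙 B) = 𝟙 (boxObj A B) := rfl

lemma boxMap_comp {A A' A'' B B' B'' : SSet.{0}} (u : A ⟶ A') (u' : A' ⟶ A'')
    (v : B ⟶ B') (v' : B' ⟶ B'') :
    boxMap (u ≫ u') (v ≫ v') = boxMap u v ≫ boxMap u' v' := rfl

def under (A : SSet.{0}) (X : BSSet) : SSet.{0} where
  obj n := boxObj A (SSet.stdSimplex.obj n.unop) ⟶ X
  map φ := TypeCat.ofHom fun σ => boxMap (𝟙 A) (SSet.stdSimplex.map φ.unop) ≫ σ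
  map_id n := by
    ext σ : 3
    show boxMap (𝟙 A) (SSet.stdSimplex.map (𝟙 n.unop)) ≫ σ = σ
    rw [show SSet.stdSimplex.{0}.map (𝟙 n.unop) = 𝟙 _ from CategoryTheory.Functor.map_id _ _, boxMap_id, Category.id_comp]
  map_comp {n m k} φ ψ := by
    ext σ : 3
    show boxMap (𝟙 A) (SSet.stdSimplex.map (ψ.unop ≫ φ.unop)) ≫ σ = _
    rw [show SSet.stdSimplex.{0}.map (ψ.unop ≫ φ.unop) = SSet.stdSimplex.map ψ.unop ≫ SSet.stdSimplex.map φ.unop from Functor.map_comp _ _ _, show (𝟙 A : A ⟶ A) = 𝟙 A ≫ 𝟙 A from (Category.id_comp _).symm,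
      boxMap_comp, Category.assoc]
    rfl

def over' (X : BSSet) (B : SSet.{0}) : SSet.{0} where
  obj n := boxObj (SSet.stdSimplex.obj n.unop) B ⟶ X
  map φ := TypeCat.ofHom fun σ => boxMap (SSet.stdSimplex.map φ.unop) (𝟙 B) ≫ σ
  map_id n := by
    ext σ : 3
    show boxMap (SSet.stdSimplex.map (𝟙 n.unop)) (𝟙 B) ≫ σ = σ
    rw [show SSet.stdSimplex.{0}.map (𝟙 n.unop) = 𝟙 _ from CategoryTheory.Functor.map_id _ _, boxMap_id, Category.id_comp]
  map_comp {n m k} φ ψ := by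
    ext σ : 3
    show boxMap (SSet.stdSimplex.map (ψ.unop ≫ φ.unop)) (𝟙 B) ≫ σ = _
    rw [show SSet.stdSimplex.{0}.map (ψ.unop ≫ φ.unop) = SSet.stdSimplex.map ψ.unop ≫ SSet.stdSimplex.map φ.unop from Functor.map_comp _ _ _, show (𝟙 B : B ⟶ B) = 𝟙 B ≫ 𝟙 B from (Category.id_comp _).symm,
      boxMap_comp, Category.assoc]
    rfl

@[simps]
def underWhisker {A A' : SSet.{0}} (u : A ⟶ A') (X : BSSet) :
    under A' X ⟶ under A X where
  app n := TypeCat.ofHom fun σ => boxMap u (𝟙 _) ≫ σ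
  naturality n m φ := rfl

@[simps]
def underPush (A : SSet.{0}) {X Y : BSSet} (f : X ⟶ Y) :
    under A X ⟶ under A Y where
  app n := TypeCat.ofHom fun σ => σ ≫ f
  naturality n m φ := rfl

@[simps]
def overPush (B : SSet.{0}) {X Y : BSSet} (f : X ⟶ Y) :
    over' X B ⟶ over' Y B where
  app n := TypeCat.ofHom fun σ => σ ≫ f
  naturality n m φ := rfl

---- new chunk

/-- The functor `A □ - : SSet ⥤ BSSet`. -/
@[simps]
def boxLFunctor (A : SSet.{0}) : SSet.{0} ⥤ BSSet where
  obj B := boxObj A B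
  map v := boxMap (𝟙 A) v
  map_id B := rfl
  map_comp v w := rfl

/-- The functor `- □ B : SSet ⥤ BSSet`. -/
@[simps]
def boxRFunctor (B : SSet.{0}) : SSet.{0} ⥤ BSSet where
  obj A := boxObj A B
  map u := boxMap u (𝟙 B)
  map_id A := rfl
  map_comp u w := rfl

/-- The functor `A \ - : BSSet ⥤ SSet`. -/
@[simps]
def underFunctor (A : SSet.{0}) : BSSet ⥤ SSet.{0} where
  obj X := under A X
  map f := underPush A f
  map_id X := rfl
  map_comp f g := rfl

/-- The functor `- / B : BSSet ⥤ SSet`. -/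
@[simps]
def overFunctor (B : SSet.{0}) : BSSet ⥤ SSet.{0} where
  obj X := over' X B
  map f := overPush B f
  map_id X := rfl
  map_comp f g := rfl

/-- A map of simplicial sets is a Kan fibration if it has the right lifting property
with respect to all horn inclusions `Λ[n, i] ⟶ Δ[n]`, `n ≥ 1`, `0 ≤ i ≤ n`. -/
def IsKanFibration {S T : SSet.{0}} (f : S ⟶ T) : Prop :=
  ∀ (n : ℕ) (i : Fin (n + 2)), HasLiftingProperty (Λ[n + 1, i].ι) f

/-- A map of simplicial sets is a trivial Kan fibration if it has the right lifting property
with respect to all boundary inclusions `∂Δ[n] ⟶ Δ[n]`. -/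
def IsTrivialKanFibration {S T : SSet.{0}} (f : S ⟶ T) : Prop :=
  ∀ (n : ℕ), HasLiftingProperty ((SSet.boundary n).ι) f

/-- A map of simplicial sets is an inner fibration if it has the right lifting property
with respect to all inner horn inclusions `Λ[n, i] ⟶ Δ[n]`, `0 < i < n`. -/
def IsInnerFibration {S T : SSet.{0}} (f : S ⟶ T) : Prop :=
  ∀ (n : ℕ) (i : Fin (n + 1)), 0 < (i : ℕ) → (i : ℕ) < n →
    HasLiftingProperty (Λ[n, i].ι) f

lemma underSq {A A' : SSet.{0}} (u : A ⟶ A') {X Y : BSSet} (f : X ⟶ Y) :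
    underWhisker u X ≫ underPush A f = underPush A' f ≫ underWhisker u Y := rfl

/-- The gap map `⟨u \ f⟩ : A' \ X ⟶ A \ X ×_{A \ Y} A' \ Y`. -/
noncomputable def underGap {A A' : SSet.{0}} (u : A ⟶ A') {X Y : BSSet} (f : X ⟶ Y) :
    under A' X ⟶ pullback (underPush A f) (underWhisker u Y) :=
  pullback.lift (underWhisker u X) (underPush A' f) (underSq u f)

/-- A map of bisimplicial sets is a Reedy fibration if for every monomorphism `u : A ⟶ A'`
of simplicial sets, the gap map `⟨u \ f⟩` is a Kan fibration. -/
def IsReedyFibration {X Y : BSSet} (f : X ⟶ Y) : Prop :=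
  ∀ ⦃A A' : SSet.{0}⦄ (u : A ⟶ A'), Mono u → IsKanFibration (underGap u f)

/-- A bisimplicial set is Reedy fibrant if for every monomorphism `u : A ⟶ A'` of
simplicial sets, the restriction map `⟨u \ X⟩ : A' \ X ⟶ A \ X` is a Kan fibration. -/
def IsReedyFibrant (X : BSSet) : Prop :=
  ∀ ⦃A A' : SSet.{0}⦄ (u : A ⟶ A'), Mono u → IsKanFibration (underWhisker u X)

/-- The cylinder `A × Δ¹` on a simplicial set. -/
def cyl (A : SSet.{0}) : SSet.{0} where
  obj n := A.obj n × Δ[1].obj n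
  map f := TypeCat.ofHom fun x => (A.map f x.1, Δ[1].map f x.2)
  map_id n := by ext x <;> simp
  map_comp f g := by ext x <;> simp

/-- The inclusion `A ⟶ A × Δ¹` at the vertex `k` of `Δ¹`. -/
def cylIncl (k : Fin 2) (A : SSet.{0}) : A ⟶ cyl A where
  app n := TypeCat.ofHom fun a => (a, SSet.stdSimplex.const 1 k n)
  naturality n m f := rfl

/-- Functoriality of the cylinder. -/
def cylMap {A B : SSet.{0}} (f : A ⟶ B) : cyl A ⟶ cyl B where
  app n := TypeCat.ofHom fun x => (f.app n x.1, x.2)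
  naturality n m φ := by
    ext x : 3
    change (f.app m (A.map φ x.1), Δ[1].map φ x.2) = (B.map φ (f.app n x.1), Δ[1].map φ x.2)
    rw [NatTrans.naturality_apply]

lemma cylIncl_cylMap (k : Fin 2) {A B : SSet.{0}} (f : A ⟶ B) :
    cylIncl k A ≫ cylMap f = f ≫ cylIncl k B := rfl

/-- Two maps of simplicial sets are related by an elementary homotopy if there is a
cylinder homotopy from one to the other. -/
def HomotopicOne {A B : SSet.{0}} (f g : A ⟶ B) : Prop :=
  ∃ H : cyl A ⟶ B, cylIncl 0 A ≫ H = f ∧ cylIncl 1 A ≫ H = g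

/-- A Kan complex: every horn has a filler. -/
def IsKanComplex (S : SSet.{0}) : Prop :=
  ∀ (n : ℕ) (i : Fin (n + 2)) (g : (Λ[n + 1, i] : SSet.{0}) ⟶ S),
    ∃ h : Δ[n + 1] ⟶ S, Λ[n + 1, i].ι ≫ h = g

/-- Precomposition on homotopy classes of maps. -/
def precompClass {A B : SSet.{0}} (f : A ⟶ B) (Z : SSet.{0}) :
    Quot (@HomotopicOne B Z) → Quot (@HomotopicOne A Z) :=
  Quot.lift (fun g => Quot.mk _ (f ≫ g)) (by
    rintro g g' ⟨H, h0, h1⟩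
    apply Quot.sound
    refine ⟨cylMap f ≫ H, ?_, ?_⟩
    · rw [← Category.assoc, cylIncl_cylMap, Category.assoc, h0]
    · rw [← Category.assoc, cylIncl_cylMap, Category.assoc, h1])

/-- A map of simplicial sets is a weak homotopy equivalence iff for every Kan complex `Z`
the induced map on homotopy classes of maps into `Z` is a bijection. -/
def WeakEquiv {A B : SSet.{0}} (f : A ⟶ B) : Prop :=
  ∀ Z : SSet.{0}, IsKanComplex Z → Function.Bijective (precompClass f Z)

/-- A commutative square of simplicial sets (with `g` thought of as the right-hand vertical
map) is a homotopy pullback if for some factorization of `g` as a weak equivalence followed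
by a Kan fibration, the induced gap map to the strict pullback is a weak equivalence. -/
noncomputable def IsHomotopyPullback {W U V Z : SSet.{0}}
    (a : W ⟶ U) (b : W ⟶ V) (g : U ⟶ Z) (h : V ⟶ Z) (comm : a ≫ g = b ≫ h) : Prop :=
  ∃ (U' : SSet.{0}) (w : U ⟶ U') (p : U' ⟶ Z) (hwp : w ≫ p = g),
    WeakEquiv w ∧ IsKanFibration p ∧
      WeakEquiv (pullback.lift (a ≫ w) b
        (by rw [Category.assoc, hwp, comm]) : W ⟶ pullback p h)

/-- The spine of `Δ[n]`: the union of the edges `Δ{i, i+1}`. -/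
def spine (n : ℕ) : SSet.{0} where
  obj m := { a : Δ[n].obj m //
    ∃ i : ℕ, ∀ j, ((SSet.stdSimplex.asOrderHom a) j : ℕ) = i ∨ ((SSet.stdSimplex.asOrderHom a) j : ℕ) = i + 1 }
  map f := TypeCat.ofHom fun a => ⟨Δ[n].map f a.1, by
    obtain ⟨i, hi⟩ := a.2
    exact ⟨i, fun j => hi _⟩⟩
  map_id m := by
    ext a : 3
    apply Subtype.ext
    show Δ[n].map (𝟙 m) a.1 = a.1
    simp
  map_comp f g := by
    ext a : 3
    apply Subtype.ext
    show Δ[n].map (f ≫ g) a.1 = Δ[n].map g (Δ[n].map f a.1)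
    simp

def spineIncl (n : ℕ) : spine n ⟶ Δ[n] where
  app m := TypeCat.ofHom fun a => a.1
  naturality n m f := rfl


/-- A Segal space: a Reedy fibrant bisimplicial set whose Segal maps
`X_n ⟶ X_1 ×_{X_0} ⋯ ×_{X_0} X_1` (i.e. the restrictions `Δⁿ \\ X ⟶ Iₙ \\ X` along the
spine inclusions) are weak homotopy equivalences for `n ≥ 2`. -/
def IsSegalSpace (X : BSSet) : Prop :=
  IsReedyFibrant X ∧ ∀ n : ℕ, 2 ≤ n → WeakEquiv (underWhisker (spineIncl n) X)

/-- The unique map to `[0]` in the simplex category. -/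
def toZero (m : SimplexCategory) : m ⟶ ⦋0⦌ :=
  SimplexCategory.Hom.mk ⟨fun _ => 0, fun _ _ _ => le_rfl⟩

lemma toZero_unique {m : SimplexCategory} (f g : m ⟶ ⦋0⦌) : f = g := by
  apply SimplexCategory.Hom.ext
  apply OrderHom.ext
  funext j
  apply Fin.ext
  have h1 : ((f.toOrderHom j : Fin (⦋0⦌.len + 1)) : ℕ) < 0 + 1 := (f.toOrderHom j).isLt
  have h2 : ((g.toOrderHom j : Fin (⦋0⦌.len + 1)) : ℕ) < 0 + 1 := (g.toOrderHom j).isLt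
  omega

lemma toZero_comp {m m' : SimplexCategory} (φ : m' ⟶ m) :
    φ ≫ toZero m = toZero m' :=
  toZero_unique _ _

lemma boxMapR_comp (A : SSet.{0}) {B B' B'' : SSet.{0}} (v : B ⟶ B') (w : B' ⟶ B'') :
    boxMap (𝟙 A) (v ≫ w) = boxMap (𝟙 A) v ≫ boxMap (𝟙 A) w := rfl

/-- The map `Δ[1] □ Δ[0] ⟶ X` corresponding to an element `e ∈ X_{1,0}` by the Yoneda lemma. -/
def yonedaBox {X : BSSet} (e : X.obj (op ⦋1⦌, op ⦋0⦌)) :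
    boxObj Δ[1] Δ[0] ⟶ X where
  app p := TypeCat.ofHom fun x =>
    X.map ((SSet.stdSimplex.objEquiv x.1).op,
      (SSet.stdSimplex.objEquiv x.2).op) e
  naturality p q φ := by
    ext x : 3
    exact Functor.map_comp_apply X
      (((SSet.stdSimplex.objEquiv (x.1 : Δ[1].obj p.1)).op,
        (SSet.stdSimplex.objEquiv (x.2 : Δ[0].obj p.2)).op) : (op ⦋1⦌, op ⦋0⦌) ⟶ p) φ e

def fApp {X Y : BSSet} (f : X ⟶ Y) (e : X.obj (op ⦋1⦌, op ⦋0⦌)) : Y.obj (op ⦋1⦌, op ⦋0⦌) :=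
  f.app (op ⦋1⦌, op ⦋0⦌) e

lemma yonedaBox_comp {X Y : BSSet} (f : X ⟶ Y) (e : X.obj (op ⦋1⦌, op ⦋0⦌)) :
    yonedaBox e ≫ f = yonedaBox (fApp f e) := by
  ext p x
  exact NatTrans.naturality_apply f _ e

/-- The constant `Δ[1] □ Δ[m]`-diagram in `X` with value the edge `e`. -/
def eConst {X : BSSet} (m : SimplexCategory) (e : X.obj (op ⦋1⦌, op ⦋0⦌)) :
    boxObj Δ[1] (SSet.stdSimplex.obj m) ⟶ X :=
  boxMap (𝟙 Δ[1]) (SSet.stdSimplex.map (toZero m)) ≫ yonedaBox e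

lemma eConst_whisker {X : BSSet} {m m' : SimplexCategory} (φ : m' ⟶ m)
    (e : X.obj (op ⦋1⦌, op ⦋0⦌)) :
    boxMap (𝟙 Δ[1]) (SSet.stdSimplex.map φ) ≫ eConst m e = eConst m' e := by
  rw [eConst, eConst, ← Category.assoc, ← boxMapR_comp, ← show SSet.stdSimplex.{0}.map (φ ≫ toZero m) = SSet.stdSimplex.map φ ≫ SSet.stdSimplex.map (toZero m) from Functor.map_comp _ _ _, toZero_comp]

lemma eConst_comp {X Y : BSSet} (f : X ⟶ Y) {m : SimplexCategory}
    (e : X.obj (op ⦋1⦌, op ⦋0⦌)) :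
    eConst m e ≫ f = eConst m (fApp f e) := by
  rw [eConst, eConst, Category.assoc, yonedaBox_comp]

/-- `(B \ X)^e`: the simplicial set of `B`-shaped diagrams in `X` whose restriction along the
edge `ι : Δ[1] ⟶ B` is constant at the edge `e ∈ X_{1,0}`. -/
def fib {B : SSet.{0}} (ι : Δ[1] ⟶ B) (X : BSSet) (e : X.obj (op ⦋1⦌, op ⦋0⦌)) :
    SSet.{0} where
  obj n := { σ : boxObj B (SSet.stdSimplex.obj n.unop) ⟶ X //
      boxMap ι (𝟙 _) ≫ σ = eConst n.unop e }
  map {n m} φ := TypeCat.ofHom fun σ => ⟨boxMap (𝟙 B) (SSet.stdSimplex.map φ.unop) ≫ σ.1, by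
    rw [← Category.assoc,
      show boxMap ι (𝟙 _) ≫ boxMap (𝟙 B) (SSet.stdSimplex.map φ.unop)
        = boxMap (𝟙 Δ[1]) (SSet.stdSimplex.map φ.unop) ≫ boxMap ι (𝟙 _) from rfl,
      Category.assoc, σ.2, eConst_whisker]⟩
  map_id n := by
    ext σ : 3
    apply Subtype.ext
    show boxMap (𝟙 B) (SSet.stdSimplex.map (𝟙 n.unop)) ≫ σ.1 = σ.1
    rw [show SSet.stdSimplex.{0}.map (𝟙 n.unop) = 𝟙 _ from CategoryTheory.Functor.map_id _ _, boxMap_id, Category.id_comp]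
  map_comp {n m k} φ ψ := by
    ext σ : 3
    apply Subtype.ext
    show boxMap (𝟙 B) (SSet.stdSimplex.map (ψ.unop ≫ φ.unop)) ≫ σ.1 = _
    rw [show SSet.stdSimplex.{0}.map (ψ.unop ≫ φ.unop) = SSet.stdSimplex.map ψ.unop ≫ SSet.stdSimplex.map φ.unop from Functor.map_comp _ _ _, boxMapR_comp, Category.assoc]
    rfl

/-- The forgetful map `(B \ X)^e ⟶ B \ X`. -/
def fibFst {B : SSet.{0}} (ι : Δ[1] ⟶ B) (X : BSSet) (e : X.obj (op ⦋1⦌, op ⦋0⦌)) :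
    fib ι X e ⟶ under B X where
  app n := TypeCat.ofHom fun σ => σ.1
  naturality n m φ := rfl

/-- Restriction `(B' \ X)^e ⟶ (B \ X)^e` along `u : B ⟶ B'`. -/
def fibRes {B B' : SSet.{0}} (u : B ⟶ B') (ι : Δ[1] ⟶ B) (X : BSSet)
    (e : X.obj (op ⦋1⦌, op ⦋0⦌)) :
    fib (ι ≫ u) X e ⟶ fib ι X e where
  app n := TypeCat.ofHom fun σ => ⟨boxMap u (𝟙 _) ≫ σ.1, by
    rw [← Category.assoc,
      show boxMap ι (𝟙 _) ≫ boxMap u (𝟙 _) = boxMap (ι ≫ u) (𝟙 _) from rfl, σ.2]⟩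
  naturality n m φ := rfl

/-- Pushforward `(B \ X)^e ⟶ (B \ Y)^{f(e)}` along `f : X ⟶ Y`. -/
def fibPush {B : SSet.{0}} (ι : Δ[1] ⟶ B) {X Y : BSSet} (f : X ⟶ Y)
    (e : X.obj (op ⦋1⦌, op ⦋0⦌)) :
    fib ι X e ⟶ fib ι Y (fApp f e) where
  app n := TypeCat.ofHom fun σ => ⟨σ.1 ≫ f, by rw [← Category.assoc, σ.2, eConst_comp]⟩
  naturality n m φ := rfl

lemma fibSq {B B' : SSet.{0}} (u : B ⟶ B') (ι : Δ[1] ⟶ B) {X Y : BSSet} (f : X ⟶ Y)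
    (e : X.obj (op ⦋1⦌, op ⦋0⦌)) :
    fibRes u ι X e ≫ fibPush ι f e = fibPush (ι ≫ u) f e ≫ fibRes u ι Y (fApp f e) := rfl

/-- The given square of fibered diagram spaces (restriction on top of pushforward)
is a homotopy pullback. -/
noncomputable def IsCocartAlong {B B' : SSet.{0}} (u : B ⟶ B') (ι : Δ[1] ⟶ B)
    {X Y : BSSet} (f : X ⟶ Y) (e : X.obj (op ⦋1⦌, op ⦋0⦌)) : Prop :=
  IsHomotopyPullback (fibRes u ι X e) (fibPush (ι ≫ u) f e)
    (fibPush ι f e) (fibRes u ι Y (fApp f e)) (fibSq u ι f e)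

/-- The gap map `(B' \ X)^e ⟶ (B \ X)^e ×_{(B \ Y)^{f(e)}} (B' \ Y)^{f(e)}`. -/
noncomputable def fibGap {B B' : SSet.{0}} (u : B ⟶ B') (ι : Δ[1] ⟶ B) {X Y : BSSet}
    (f : X ⟶ Y) (e : X.obj (op ⦋1⦌, op ⦋0⦌)) :
    fib (ι ≫ u) X e ⟶ pullback (fibPush ι f e) (fibRes u ι Y (fApp f e)) :=
  pullback.lift (fibRes u ι X e) (fibPush (ι ≫ u) f e) (fibSq u ι f e)

/-- The morphism `[1] ⟶ [n]` in the simplex category given by `0 ↦ 0`, `1 ↦ 1`. -/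
def edge01Hom (n : ℕ) (h : 1 ≤ n) : (⦋1⦌ : SimplexCategory) ⟶ ⦋n⦌ :=
  SimplexCategory.Hom.mk ⟨Fin.castLE (by simp only [SimplexCategory.len_mk]; omega),
    (Fin.strictMono_castLE _).monotone⟩

/-- The edge `Δ^{0,1} ⟶ Δⁿ`. -/
def edge01 (n : ℕ) (h : 1 ≤ n) : Δ[1] ⟶ Δ[n] :=
  SSet.stdSimplex.map (edge01Hom n h)

/-- The edge `Δ^{0,1} ⟶ Λ[n, 0]` of the left horn. -/
def edgeHorn (n : ℕ) (h : 2 ≤ n) : Δ[1] ⟶ (Λ[n, 0] : SSet.{0}) where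
  app m := TypeCat.ofHom fun a => ⟨(edge01 n (by omega)).app m a, by
    show _ ≠ _
    intro hEq
    have h2 : (⟨2, by omega⟩ : Fin (n + 1)) ∈
        Set.range (SSet.stdSimplex.asOrderHom ((edge01 n (by omega)).app m a)) ∪ {0} := by
      rw [hEq]; exact Set.mem_univ _
    rcases h2 with ⟨j, hj⟩ | h0
    · have hsmall : ((SSet.stdSimplex.asOrderHom ((edge01 n (by omega)).app m a)) j : ℕ) < 2 :=
        ((SSet.stdSimplex.asOrderHom a) j).isLt
      have hv : ((SSet.stdSimplex.asOrderHom ((edge01 n (by omega)).app m a)) j : ℕ) = 2 :=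
        congrArg Fin.val hj
      omega
    · rw [Set.mem_singleton_iff] at h0
      have := congrArg Fin.val h0
      simp at this⟩
  naturality m m' φ := by
    ext a : 3
    apply Subtype.ext
    exact ConcreteCategory.congr_hom ((edge01 n (by omega)).naturality φ) a

lemma edgeHorn_incl (n : ℕ) (h : 2 ≤ n) :
    edgeHorn n h ≫ Λ[n, 0].ι = edge01 n (by omega) := rfl

/-- A morphism `e ∈ X_{1,0}` is `f`-cocartesian if the square
`(Δ² \ X)^e → (Λ²₀ \ X)^e` over `(Δ² \ Y)^{f(e)} → (Λ²₀ \ Y)^{f(e)}` is a homotopy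
pullback. -/
noncomputable def IsCocartesianEdge {X Y : BSSet} (f : X ⟶ Y)
    (e : X.obj (op ⦋1⦌, op ⦋0⦌)) : Prop :=
  IsCocartAlong (Λ[2, 0].ι) (edgeHorn 2 (by omega)) f e

/-- Abbreviation for `op [k]`. -/
abbrev sc (k : ℕ) : SimplexCategoryᵒᵖ := op (SimplexCategory.mk k)

lemma fibFst_push {B : SSet.{0}} (ι : Δ[1] ⟶ B) {X Y : BSSet} (f : X ⟶ Y)
    (e : X.obj (op ⦋1⦌, op ⦋0⦌)) :
    fibFst ι X e ≫ underPush B f = fibPush ι f e ≫ fibFst ι Y (fApp f e) := rfl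

lemma fibFst_whisker {B B' : SSet.{0}} (u : B ⟶ B') (ι : Δ[1] ⟶ B) (X : BSSet)
    (e : X.obj (op ⦋1⦌, op ⦋0⦌)) :
    fibFst (ι ≫ u) X e ≫ underWhisker u X = fibRes u ι X e ≫ fibFst ι X e := rfl

/-- The forgetful map
`(B' \ Y)^{f(e)} ×_{(B \ Y)^{f(e)}} (B \ X)^e ⟶ B' \ Y ×_{B \ Y} B \ X`
(with the pullbacks written in the other order). -/
noncomputable def fibForget {B B' : SSet.{0}} (u : B ⟶ B') (ι : Δ[1] ⟶ B) {X Y : BSSet}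
    (f : X ⟶ Y) (e : X.obj (op ⦋1⦌, op ⦋0⦌)) :
    pullback (fibPush ι f e) (fibRes u ι Y (fApp f e)) ⟶
      pullback (underPush B f) (underWhisker u Y) :=
  pullback.lift
    (pullback.fst _ _ ≫ fibFst ι X e)
    (pullback.snd _ _ ≫ fibFst (ι ≫ u) Y (fApp f e))
    (by
      rw [Category.assoc, Category.assoc, fibFst_push, fibFst_whisker,
        ← Category.assoc, ← Category.assoc, pullback.condition])

/-- The left spine `Lₙ ⊆ Δⁿ`: the union of the edge `Δ^{0,1}` with the spine
`Δ^{0,2} ∪ Δ^{2,3} ∪ ⋯ ∪ Δ^{n-1,n}` of the face `d₁Δⁿ`. -/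
def leftSpine (n : ℕ) : SSet.{0} where
  obj m := { a : Δ[n].obj m //
    (∀ j, ((SSet.stdSimplex.asOrderHom a) j : ℕ) ≤ 1) ∨
    (∀ j, ((SSet.stdSimplex.asOrderHom a) j : ℕ) = 0 ∨ ((SSet.stdSimplex.asOrderHom a) j : ℕ) = 2) ∨
    (∃ i : ℕ, 2 ≤ i ∧
      ∀ j, ((SSet.stdSimplex.asOrderHom a) j : ℕ) = i ∨ ((SSet.stdSimplex.asOrderHom a) j : ℕ) = i + 1) }
  map {m m'} φ := TypeCat.ofHom fun a => ⟨Δ[n].map φ a.1, by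
    rcases a.2 with h | h | ⟨i, h2, h⟩
    exacts [Or.inl fun j => h _, Or.inr (Or.inl fun j => h _),
      Or.inr (Or.inr ⟨i, h2, fun j => h _⟩)]⟩
  map_id m := by
    ext a : 3
    apply Subtype.ext
    show Δ[n].map (𝟙 m) a.1 = a.1
    simp
  map_comp φ ψ := by
    ext a : 3
    apply Subtype.ext
    show Δ[n].map (φ ≫ ψ) a.1 = Δ[n].map ψ (Δ[n].map φ a.1)
    simp

def leftSpineIncl (n : ℕ) : leftSpine n ⟶ Δ[n] where
  app m := TypeCat.ofHom fun a => a.1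
  naturality m m' φ := rfl

/-- The edge `Δ^{0,1} ⟶ Lₙ`. -/
def edgeLeftSpine (n : ℕ) (h : 1 ≤ n) : Δ[1] ⟶ leftSpine n where
  app m := TypeCat.ofHom fun a => ⟨(edge01 n h).app m a,
    Or.inl fun j => Nat.lt_succ_iff.mp ((SSet.stdSimplex.asOrderHom a) j).isLt⟩
  naturality m m' φ := by
    ext a : 3
    apply Subtype.ext
    exact ConcreteCategory.congr_hom ((edge01 n h).naturality φ) a

lemma edgeLeftSpine_incl (n : ℕ) (h : 1 ≤ n) :
    edgeLeftSpine n h ≫ leftSpineIncl n = edge01 n h := rfl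

/-- The `m`-th column `X_m` of a bisimplicial set, as a simplicial set. -/
def col (X : BSSet) (m : SimplexCategory) : SSet.{0} where
  obj n := X.obj (op m, n)
  map {n n'} g := TypeCat.ofHom fun x => X.map (𝟙 (op m), g) x
  map_id n := by
    ext x : 3
    exact ConcreteCategory.congr_hom (X.map_id (op m, n)) x
  map_comp {n n' n''} g h := by
    ext x : 3
    exact Functor.map_comp_apply X
      ((𝟙 (op m), g) : (op m, n) ⟶ (op m, n'))
      ((𝟙 (op m), h) : (op m, n') ⟶ (op m, n'')) x

/-- Horizontal face of an edge `e ∈ X_{1,0}`: `hface 1 e` is the source vertex and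
`hface 0 e` the target vertex. -/
def hface {X : BSSet} (i : Fin 2) (e : X.obj (op ⦋1⦌, op ⦋0⦌)) : X.obj (op ⦋0⦌, op ⦋0⦌) :=
  X.map ((((SimplexCategory.δ i).op : sc 1 ⟶ sc 0), 𝟙 (sc 0)) :
    (sc 1, sc 0) ⟶ (sc 0, sc 0)) e

/-- The degenerate (identity) edge on a vertex `x ∈ X_{0,0}`. -/
def hdegen {X : BSSet} (x : X.obj (op ⦋0⦌, op ⦋0⦌)) : X.obj (op ⦋1⦌, op ⦋0⦌) :=
  X.map ((((SimplexCategory.σ 0).op : sc 0 ⟶ sc 1), 𝟙 (sc 0)) :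
    (sc 0, sc 0) ⟶ (sc 1, sc 0)) x

/-- Vertical face of `h ∈ X_{1,1}`: `vface 1 h` and `vface 0 h` are the two endpoints of the
path `h` in the space `X_1`. -/
def vface {X : BSSet} (i : Fin 2) (h : X.obj (op ⦋1⦌, op ⦋1⦌)) : X.obj (op ⦋1⦌, op ⦋0⦌) :=
  X.map ((𝟙 (sc 1), ((SimplexCategory.δ i).op : sc 1 ⟶ sc 0)) :
    (sc 1, sc 1) ⟶ (sc 1, sc 0)) h

/-- Horizontal faces of a `2`-simplex `τ ∈ X_{2,0}`. -/
def hface2 {X : BSSet} (i : Fin 3) (τ : X.obj (op ⦋2⦌, op ⦋0⦌)) : X.obj (op ⦋1⦌, op ⦋0⦌) :=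
  X.map ((((SimplexCategory.δ i).op : sc 2 ⟶ sc 1), 𝟙 (sc 0)) :
    (sc 2, sc 0) ⟶ (sc 1, sc 0)) τ

/-- Two edges are connected by a path in the space `X_1` . -/
def PathConn (X : BSSet) : X.obj (op ⦋1⦌, op ⦋0⦌) → X.obj (op ⦋1⦌, op ⦋0⦌) → Prop :=
  Relation.EqvGen (fun e e' => ∃ h : X.obj (op ⦋1⦌, op ⦋1⦌), vface 1 h = e ∧ vface 0 h = e')

/-- A homotopy equivalence in a Segal space, in the sense of Rezk: an edge admitting a right
inverse and a left inverse up to homotopy. -/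
def IsHomotopyEquivalenceEdge (X : BSSet) (e : X.obj (op ⦋1⦌, op ⦋0⦌)) : Prop :=
  (∃ (g : X.obj (op ⦋1⦌, op ⦋0⦌)) (τ : X.obj (op ⦋2⦌, op ⦋0⦌)),
    hface2 2 τ = g ∧ hface2 0 τ = e ∧ PathConn X (hface2 1 τ) (hdegen (hface 1 g))) ∧
  (∃ (g' : X.obj (op ⦋1⦌, op ⦋0⦌)) (τ' : X.obj (op ⦋2⦌, op ⦋0⦌)),
    hface2 2 τ' = e ∧ hface2 0 τ' = g' ∧ PathConn X (hface2 1 τ') (hdegen (hface 1 e)))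

/-- A cocartesian edge in the quasicategorical sense, for a map `π : C ⟶ D` of simplicial
sets: all left horns (for `n ≥ 2`) whose initial edge is `c`, together with a filler
downstairs, can be filled upstairs. -/
def QCocartesianEdge {C D : SSet.{0}} (π : C ⟶ D) (c : C.obj (op ⦋1⦌)) : Prop :=
  ∀ (n : ℕ) (hn : 2 ≤ n) (g : (Λ[n, 0] : SSet.{0}) ⟶ C) (d : Δ[n] ⟶ D),
    SSet.yonedaEquiv (edgeHorn n hn ≫ g) = c →
    g ≫ π = Λ[n, 0].ι ≫ d →
    ∃ h : Δ[n] ⟶ C, Λ[n, 0].ι ≫ h = g ∧ h ≫ π = d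

/-- A cocartesian fibration of quasicategories: an inner fibration such that every edge
downstairs with a lift of its source admits a cocartesian lift. -/
def IsQCocartesianFibration {C D : SSet.{0}} (π : C ⟶ D) : Prop :=
  IsInnerFibration π ∧
  ∀ (σ : D.obj (op ⦋1⦌)) (x : C.obj (op ⦋0⦌)),
    π.app (op ⦋0⦌) x = D.map (SimplexCategory.δ 1).op σ →
    ∃ c : C.obj (op ⦋1⦌), QCocartesianEdge π c ∧ π.app (op ⦋1⦌) c = σ ∧
      C.map (SimplexCategory.δ 1).op c = x

/-- A cocartesian fibration between Segal spaces: a Reedy fibration such that every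
morphism of `Y` with a lift of its source vertex admits an `f`-cocartesian lift. -/
noncomputable def IsCocartesianFibration {X Y : BSSet} (f : X ⟶ Y) : Prop :=
  IsReedyFibration f ∧
  ∀ (σ : Y.obj (op ⦋1⦌, op ⦋0⦌)) (x : X.obj (op ⦋0⦌, op ⦋0⦌)),
    f.app (op ⦋0⦌, op ⦋0⦌) x = hface 1 σ →
    ∃ e : X.obj (op ⦋1⦌, op ⦋0⦌), IsCocartesianEdge f e ∧ fApp f e = σ ∧ hface 1 e = x

/-- The identity `m`-simplex of the standard simplex `Δ^m`. -/
def idSimplex (m : SimplexCategory) : (SSet.stdSimplex.{0}.obj m).obj (op m) :=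
  (SSet.stdSimplex.objEquiv (n := m) (m := op m)).symm (𝟙 m)

/-- A marked simplicial set: a simplicial set together with a set of marked edges
containing all degenerate edges. -/
structure MSSet : Type 1 where
  carrier : SSet.{0}
  marked : Set (carrier.obj (op ⦋1⦌))
  degen_marked : ∀ x : carrier.obj (op ⦋0⦌),
    carrier.map ((SimplexCategory.σ 0).op : sc 0 ⟶ sc 1) x ∈ marked

instance : Category MSSet where
  Hom A B := { g : A.carrier ⟶ B.carrier // ∀ a ∈ A.marked, g.app (op ⦋1⦌) a ∈ B.marked }
  id A := ⟨𝟙 A.carrier, fun _ ha => ha⟩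
  comp f g := ⟨f.1 ≫ g.1, fun a ha => g.2 _ (f.2 a ha)⟩
  id_comp f := Subtype.ext (Category.id_comp _)
  comp_id f := Subtype.ext (Category.comp_id _)
  assoc f g h := Subtype.ext (Category.assoc _ _ _)

/-- A marked bisimplicial set: a bisimplicial set together with a set of marked edges in
`X_{1,0}` containing all degenerate edges. -/
structure MBSSet : Type 1 where
  carrier : BSSet
  marked : Set (carrier.obj (op ⦋1⦌, op ⦋0⦌))
  degen_marked : ∀ x : carrier.obj (op ⦋0⦌, op ⦋0⦌), hdegen x ∈ marked

instance : Category MBSSet where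
  Hom X Y := { g : X.carrier ⟶ Y.carrier //
    ∀ a ∈ X.marked, g.app (op ⦋1⦌, op ⦋0⦌) a ∈ Y.marked }
  id X := ⟨𝟙 X.carrier, fun _ ha => ha⟩
  comp f g := ⟨f.1 ≫ g.1, fun a ha => g.2 _ (f.2 a ha)⟩
  id_comp f := Subtype.ext (Category.id_comp _)
  comp_id f := Subtype.ext (Category.comp_id _)
  assoc f g h := Subtype.ext (Category.assoc _ _ _)

/-- The marked box product `A □ B` of a marked simplicial set and a simplicial set:
an edge `(a, b) ∈ A₁ × B₀` is marked iff `a` is marked. -/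
def mBoxObj (A : MSSet) (B : SSet.{0}) : MBSSet where
  carrier := boxObj A.carrier B
  marked := { z | z.1 ∈ A.marked }
  degen_marked x := A.degen_marked x.1

/-- The marked division `A \ X`: its `n`-simplices are the marked maps `A □ Δⁿ ⟶ X`. -/
def mUnder (A : MSSet) (X : MBSSet) : SSet.{0} where
  obj n := { σ : boxObj A.carrier (SSet.stdSimplex.obj n.unop) ⟶ X.carrier //
      ∀ a ∈ A.marked, ∀ b, σ.app (op ⦋1⦌, op ⦋0⦌) (a, b) ∈ X.marked }
  map {n m} φ := TypeCat.ofHom fun σ =>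
    ⟨boxMap (𝟙 A.carrier) (SSet.stdSimplex.map φ.unop) ≫ σ.1,
      fun a ha b => σ.2 a ha _⟩
  map_id n := by
    ext σ : 3
    apply Subtype.ext
    show boxMap (𝟙 A.carrier) (SSet.stdSimplex.map (𝟙 n.unop)) ≫ σ.1 = σ.1
    rw [show SSet.stdSimplex.{0}.map (𝟙 n.unop) = 𝟙 _ from CategoryTheory.Functor.map_id _ _, boxMap_id, Category.id_comp]
  map_comp {n m k} φ ψ := by
    ext σ : 3
    apply Subtype.ext
    show boxMap (𝟙 A.carrier) (SSet.stdSimplex.map (ψ.unop ≫ φ.unop)) ≫ σ.1 = _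
    rw [show SSet.stdSimplex.{0}.map (ψ.unop ≫ φ.unop) = SSet.stdSimplex.map ψ.unop ≫ SSet.stdSimplex.map φ.unop from Functor.map_comp _ _ _, boxMapR_comp, Category.assoc]
    rfl

/-- Restriction of marked divisions along a map of marked simplicial sets. -/
def mUnderWhisker {A A' : MSSet} (u : A ⟶ A') (X : MBSSet) :
    mUnder A' X ⟶ mUnder A X where
  app n := TypeCat.ofHom fun σ => ⟨boxMap u.1 (𝟙 _) ≫ σ.1, fun a ha b => σ.2 _ (u.2 a ha) b⟩
  naturality n m φ := rfl

/-- Pushforward of marked divisions along a map of marked bisimplicial sets. -/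
def mUnderPush (A : MSSet) {X Y : MBSSet} (f : X ⟶ Y) :
    mUnder A X ⟶ mUnder A Y where
  app n := TypeCat.ofHom fun σ => ⟨σ.1 ≫ f.1, fun a ha b => f.2 _ (σ.2 a ha b)⟩
  naturality n m φ := rfl

lemma mUnderSq {A A' : MSSet} (u : A ⟶ A') {X Y : MBSSet} (f : X ⟶ Y) :
    mUnderWhisker u X ≫ mUnderPush A f = mUnderPush A' f ≫ mUnderWhisker u Y := rfl

/-- The gap map `⟨u \ f⟩` for marked divisions. -/
noncomputable def mUnderGap {A A' : MSSet} (u : A ⟶ A') {X Y : MBSSet} (f : X ⟶ Y) :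
    mUnder A' X ⟶ pullback (mUnderPush A f) (mUnderWhisker u Y) :=
  pullback.lift (mUnderWhisker u X) (mUnderPush A' f) (mUnderSq u f)

/-- The marked slice `X / B`: underlying simplicial set `X̊ / B`, an edge being marked iff
it sends each pair `(id₁, b)` to a marked edge of `X`. -/
def mOver (X : MBSSet) (B : SSet.{0}) : MSSet where
  carrier := over' X.carrier B
  marked := setOf fun σ : (over' X.carrier B).obj (op ⦋1⦌) =>
      ∀ b : B.obj (op ⦋0⦌), NatTrans.app σ (op ⦋1⦌, op ⦋0⦌) (idSimplex ⦋1⦌, b) ∈ X.marked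
  degen_marked x := by
    intro b
    have h := NatTrans.naturality_apply x ((((SimplexCategory.σ 0).op : sc 0 ⟶ sc 1), 𝟙 (sc 0)) :
        (sc 0, sc 0) ⟶ (sc 1, sc 0))
      ((idSimplex ⦋0⦌, b) : (boxObj (SSet.stdSimplex.obj ⦋0⦌) B).obj (sc 0, sc 0))
    simp only [boxObj_map, Functor.map_id_apply] at h
    exact Set.mem_of_eq_of_mem h (X.degen_marked _)

/-- Pushforward of marked slices. -/
def mOverPush (B : SSet.{0}) {X Y : MBSSet} (f : X ⟶ Y) :
    mOver X B ⟶ mOver Y B :=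
  ⟨overPush B f.1, by
    intro σ hσ
    exact fun b => f.2 _ (hσ b)⟩

/-- The functor `A □ - : SSet ⥤ MBSSet` for a marked simplicial set `A`. -/
def mBoxLFunctor (A : MSSet) : SSet.{0} ⥤ MBSSet where
  obj B := mBoxObj A B
  map v := ⟨boxMap (𝟙 A.carrier) v, fun z hz => hz⟩
  map_id B := Subtype.ext rfl
  map_comp v w := Subtype.ext rfl

/-- The functor `A \ - : MBSSet ⥤ SSet` for a marked simplicial set `A`. -/
def mUnderFunctor (A : MSSet) : MBSSet ⥤ SSet.{0} where
  obj X := mUnder A X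
  map f := mUnderPush A f
  map_id X := by
    ext n σ : 4
    exact Subtype.ext (Category.comp_id _)
  map_comp f g := rfl

/-- The functor `- □ B : MSSet ⥤ MBSSet` for a simplicial set `B`. -/
def mBoxRFunctor (B : SSet.{0}) : MSSet ⥤ MBSSet where
  obj A := mBoxObj A B
  map u := ⟨boxMap u.1 (𝟙 B), fun z hz => u.2 z.1 hz⟩
  map_id A := Subtype.ext rfl
  map_comp u v := Subtype.ext rfl

/-- The functor `- / B : MBSSet ⥤ MSSet` for a simplicial set `B`. -/
def mOverFunctor (B : SSet.{0}) : MBSSet ⥤ MSSet where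
  obj X := mOver X B
  map f := mOverPush B f
  map_id X := by
    apply Subtype.ext
    ext n σ : 4
    exact Category.comp_id _
  map_comp f g := rfl

/-- The vertex `v` of a simplex. -/
def vertexOf {S : SSet.{0}} {n : SimplexCategoryᵒᵖ} (σ : S.obj n)
    (v : Fin (n.unop.len + 1)) : S.obj (op ⦋0⦌) :=
  S.map (Quiver.Hom.op
    (SimplexCategory.Hom.mk (OrderHom.const _ v) : (⦋0⦌ : SimplexCategory) ⟶ n.unop)) σ

/-- A full inclusion of simplicial sets: a levelwise injection such that any simplex all of
whose vertices lie in the image itself lies in the image. -/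
def IsFullInclusion {S T : SSet.{0}} (j : S ⟶ T) : Prop :=
  (∀ n, Function.Injective (j.app n)) ∧
  ∀ (n : SimplexCategoryᵒᵖ) (σ : T.obj n),
    (∀ v : Fin (n.unop.len + 1), vertexOf σ v ∈ Set.range (j.app (op ⦋0⦌))) →
    σ ∈ Set.range (j.app n)

/-- The inclusion `A \ X ⟶ Å \ X̊` of the marked division into the unmarked one. -/
def mUnderIncl (A : MSSet) (X : MBSSet) : mUnder A X ⟶ under A.carrier X.carrier where
  app n := TypeCat.ofHom fun σ => σ.1
  naturality n m φ := rfl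

/-- A marking on a marked bisimplicial set respects path components if for every edge
`e → e'` in the space `X₁`, `e` is marked iff `e'` is marked. -/
def MarkingRespectsPathComponents (X : MBSSet) : Prop :=
  ∀ h : X.carrier.obj (op ⦋1⦌, op ⦋1⦌), (vface 1 h ∈ X.marked ↔ vface 0 h ∈ X.marked)

/-- The `ℒ`-marking on a simplicial set `B` equipped with an edge `ι : Δ¹ ⟶ B`: the only
marked edges are the degenerate ones and (the image of) `ι`. -/
def mkL (B : SSet.{0}) (ι : Δ[1] ⟶ B) : MSSet where
  carrier := B
  marked := Set.range (B.map ((SimplexCategory.σ 0).op : sc 0 ⟶ sc 1)) ∪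
    {ι.app (op ⦋1⦌) (idSimplex ⦋1⦌)}
  degen_marked x := Or.inl ⟨x, rfl⟩

/-- A map between `ℒ`-marked simplicial sets preserving the distinguished edges. -/
def mkLHom {A B : SSet.{0}} (i : A ⟶ B) (ιA : Δ[1] ⟶ A) (ιB : Δ[1] ⟶ B)
    (h : ιA ≫ i = ιB) : mkL A ιA ⟶ mkL B ιB :=
  ⟨i, by
    rintro a (⟨x, rfl⟩ | ha)
    · exact Or.inl ⟨i.app _ x, (NatTrans.naturality_apply i _ x).symm⟩
    · right
      obtain rfl := Set.mem_singleton_iff.mp ha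
      subst h
      exact Set.mem_singleton_iff.mpr rfl⟩

lemma eConst_app {X : BSSet} (m : SimplexCategory) (e : X.obj (op ⦋1⦌, op ⦋0⦌))
    (b : (SSet.stdSimplex.{0}.obj m).obj (sc 0)) :
    (eConst m e).app (op ⦋1⦌, op ⦋0⦌) (idSimplex ⦋1⦌, b) = e := by
  show X.map ((SSet.stdSimplex.objEquiv (n := ⦋1⦌) (m := sc 1)
      (idSimplex ⦋1⦌)).op,
    (SSet.stdSimplex.objEquiv (n := ⦋0⦌) (m := sc 0)
      ((SSet.stdSimplex.map (toZero m)).app (sc 0) b)).op) e = e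
  rw [show SSet.stdSimplex.objEquiv (n := ⦋1⦌) (m := sc 1) (idSimplex ⦋1⦌)
      = 𝟙 (⦋1⦌ : SimplexCategory) from Equiv.apply_symm_apply _ _,
    toZero_unique (SSet.stdSimplex.objEquiv (n := ⦋0⦌) (m := sc 0)
      ((SSet.stdSimplex.map (toZero m)).app (sc 0) b)) (𝟙 (⦋0⦌ : SimplexCategory))]
  exact FunctorToTypes.map_id_apply X e

/-- The map from a fibered diagram space to the `ℒ`-marked division, well-defined when the
fixed edge `e` is marked. -/
def fibToMarked {B : SSet.{0}} (ι : Δ[1] ⟶ B) (X : MBSSet)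
    (e : X.carrier.obj (op ⦋1⦌, op ⦋0⦌)) (he : e ∈ X.marked) :
    fib ι X.carrier e ⟶ mUnder (mkL B ι) X where
  app n := TypeCat.ofHom fun σ => ⟨σ.1, by
    rintro a (⟨x, rfl⟩ | ha) b
    · have h := NatTrans.naturality_apply σ.1 ((((SimplexCategory.σ 0).op : sc 0 ⟶ sc 1), 𝟙 (sc 0)) :
          (sc 0, sc 0) ⟶ (sc 1, sc 0)) ((x, b) : (boxObj B (SSet.stdSimplex.obj n.unop)).obj (sc 0, sc 0))
      simp only [boxObj_map, Functor.map_id_apply] at h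
      exact Set.mem_of_eq_of_mem h (X.degen_marked _)
    · obtain rfl := Set.mem_singleton_iff.mp ha
      have h := ConcreteCategory.congr_hom (congrArg (fun τ => NatTrans.app τ (sc 1, sc 0)) σ.2)
        ((idSimplex ⦋1⦌, b) : (boxObj Δ[1] (SSet.stdSimplex.obj n.unop)).obj (sc 1, sc 0))
      rw [eConst_app] at h
      exact Set.mem_of_eq_of_mem h he⟩
  naturality n m φ := rfl


end Paper

/-!
Forgetting the markings turns a horn-filling problem for `⟨u \ f⟩` into one for the unmarked
gap map, which has a solution `h : Δⁿ⁺¹ ⟶ Å' \ X̊` because `f` is a Reedy fibration. Since the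
marked divisions are subobjects of the unmarked ones, it remains to see that `h` lands in
`A' \ X`, i.e. that `h` sends `(a, v)` to a marked edge for every marked `a` and every vertex
`v` of `Δⁿ⁺¹`. An edge of `Δⁿ⁺¹` is sent to a path in the space `X₁`, so, the marking respecting
path components, this only depends on the path component of `v`. As `Δⁿ⁺¹` is connected, it
suffices to check it at the vertex `i`, which lies in the horn, where `h` is the given marked map.
-/

universe u

namespace CategoryTheory

variable {C : Type*} [Category C]

instance Limits.pullback.map_mono {W X Y Z S T : C} (f₁ : W ⟶ S) (f₂ : X ⟶ S)
    [HasPullback f₁ f₂] (g₁ : Y ⟶ T) (g₂ : Z ⟶ T) [HasPullback g₁ g₂] (i₁ : W ⟶ Y)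
    (i₂ : X ⟶ Z) (i₃ : S ⟶ T) (eq₁ : f₁ ≫ i₃ = i₁ ≫ g₁) (eq₂ : f₂ ≫ i₃ = i₂ ≫ g₂)
    [Mono i₁] [Mono i₂] :
    Mono (pullback.map f₁ f₂ g₁ g₂ i₁ i₂ i₃ eq₁ eq₂) := by
  refine ⟨fun a b hab => pullback.hom_ext ?_ ?_⟩
  · have := hab =≫ pullback.fst g₁ g₂
    rwa [Category.assoc, Category.assoc, pullback.lift_fst, ← Category.assoc,
      ← Category.assoc, cancel_mono] at this
  · have := hab =≫ pullback.snd g₁ g₂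
    rwa [Category.assoc, Category.assoc, pullback.lift_snd, ← Category.assoc,
      ← Category.assoc, cancel_mono] at this

lemma HasLiftingProperty.of_mono_of_factors {K L S T S' T' : C} (i : K ⟶ L) {f : S ⟶ T}
    {f' : S' ⟶ T'} {α : S ⟶ S'} {β : T ⟶ T'} [Mono α] [Mono β] (w : α ≫ f' = f ≫ β)
    [HasLiftingProperty i f']
    (hfac : ∀ (g : K ⟶ S) (h : L ⟶ S'), i ≫ h = g ≫ α → ∃ l : L ⟶ S, l ≫ α = h) :
    HasLiftingProperty i f where
  sq_hasLift {g d} sq := by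
    have sq' : CommSq (g ≫ α) i f' (d ≫ β) := ⟨by rw [Category.assoc, w, sq.w_assoc]⟩
    obtain ⟨l, hl⟩ := hfac g sq'.lift sq'.fac_left
    refine ⟨⟨⟨l, ?_, ?_⟩⟩⟩
    · rw [← cancel_mono α, Category.assoc, hl, sq'.fac_left]
    · rw [← cancel_mono β, Category.assoc, ← w, ← Category.assoc, hl, sq'.fac_right]

end CategoryTheory

namespace SSet.stdSimplex

lemma δ_one_edge (n : ℕ) (a b : Fin (n + 1)) (hab : a ≤ b) :
    Δ[n].δ 1 (edge.{u} n a b hab) = obj₀Equiv.symm a :=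
  obj₀Equiv.injective rfl

lemma δ_zero_edge (n : ℕ) (a b : Fin (n + 1)) (hab : a ≤ b) :
    Δ[n].δ 0 (edge.{u} n a b hab) = obj₀Equiv.symm b :=
  obj₀Equiv.injective rfl

instance isPreconnected (n : ℕ) : (Δ[n] : SSet.{u}).IsPreconnected where
  allEq x y := by
    suffices h : ∀ v : Δ[n] _⦋0⦌, π₀.mk v = π₀.mk (obj₀Equiv.symm 0) by
      obtain ⟨x, rfl⟩ := π₀.mk_surjective x
      obtain ⟨y, rfl⟩ := π₀.mk_surjective y
      rw [h x, h y]
    intro v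
    rw [← obj₀Equiv.symm_apply_apply v]
    exact (π₀.sound (Edge.mk (edge n 0 _ (Fin.zero_le _)) (δ_one_edge ..) (δ_zero_edge ..))).symm

lemma const_mem_horn (n : ℕ) (i : Fin (n + 2)) (m : SimplexCategoryᵒᵖ) :
    const.{u} (n + 1) i m ∈ Λ[n + 1, i].obj m := by
  obtain ⟨j, hj⟩ := exists_ne i
  rw [mem_horn_iff, Set.ne_univ_iff_exists_notMem]
  refine ⟨j, ?_⟩
  rintro (⟨_, hk⟩ | hk)
  exacts [hj hk.symm, hj hk]

end SSet.stdSimplex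

namespace Paper

open SSet

section MarkedDivision

variable {X : MBSSet}

def PreservesMarking {A : MSSet} {B : SSet.{0}} (σ : boxObj A.carrier B ⟶ X.carrier) : Prop :=
  ∀ a ∈ A.marked, ∀ b, σ.app (op ⦋1⦌, op ⦋0⦌) (a, b) ∈ X.marked

lemma vface_app {A B : SSet.{0}} (σ : boxObj A B ⟶ X.carrier) (i : Fin 2) (a : A _⦋1⦌)
    (b : B _⦋1⦌) :
    vface i (σ.app (op ⦋1⦌, op ⦋1⦌) (a, b)) = σ.app (op ⦋1⦌, op ⦋0⦌) (a, B.δ i b) := by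
  refine (NatTrans.naturality_apply σ _ _).symm.trans ?_
  simp only [boxObj_map, Functor.map_id_apply]
  rfl

lemma mem_marked_iff_of_edge (hX : MarkingRespectsPathComponents X) {A B : SSet.{0}}
    (σ : boxObj A B ⟶ X.carrier) (a : A _⦋1⦌) (b : B _⦋1⦌) :
    σ.app (op ⦋1⦌, op ⦋0⦌) (a, B.δ 1 b) ∈ X.marked ↔
      σ.app (op ⦋1⦌, op ⦋0⦌) (a, B.δ 0 b) ∈ X.marked := by
  have := hX (σ.app (op ⦋1⦌, op ⦋1⦌) (a, b))
  rwa [vface_app, vface_app] at this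

lemma mem_marked_iff_of_π₀_mk_eq (hX : MarkingRespectsPathComponents X) {A B : SSet.{0}}
    (σ : boxObj A B ⟶ X.carrier) (a : A _⦋1⦌) {b b' : B _⦋0⦌} (h : π₀.mk b = π₀.mk b') :
    σ.app (op ⦋1⦌, op ⦋0⦌) (a, b) ∈ X.marked ↔ σ.app (op ⦋1⦌, op ⦋0⦌) (a, b') ∈ X.marked := by
  have hedge : ∀ ⦃x₀ x₁ : B _⦋0⦌⦄ (e : B.Edge x₀ x₁),
      (σ.app (op ⦋1⦌, op ⦋0⦌) (a, x₀) ∈ X.marked) = (σ.app (op ⦋1⦌, op ⦋0⦌) (a, x₁) ∈ X.marked) :=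
    fun _ _ e => by
      obtain ⟨s, rfl, rfl⟩ : ∃ s, B.δ 1 s = _ ∧ B.δ 0 s = _ := ⟨e.edge, e.src_eq, e.tgt_eq⟩
      exact propext (mem_marked_iff_of_edge hX σ a s)
  exact Iff.of_eq (congrArg (π₀.lift _ hedge) h)

lemma preservesMarking_of_vertex (hX : MarkingRespectsPathComponents X) {A : MSSet}
    {B : SSet.{0}} [B.IsPreconnected] (σ : boxObj A.carrier B ⟶ X.carrier) (b₀ : B _⦋0⦌)
    (hb₀ : ∀ a ∈ A.marked, σ.app (op ⦋1⦌, op ⦋0⦌) (a, b₀) ∈ X.marked) :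
    PreservesMarking σ := fun a ha _ =>
  (mem_marked_iff_of_π₀_mk_eq hX σ a (Subsingleton.elim _ _)).1 (hb₀ a ha)

lemma app_app_eq_yonedaEquiv_app {A : SSet.{0}} {n : ℕ} (h : Δ[n] ⟶ under A X.carrier)
    {m : SimplexCategoryᵒᵖ} (x : Δ[n].obj m) (p : SimplexCategoryᵒᵖ × SimplexCategoryᵒᵖ)
    (a : A.obj p.1) (b : Δ[m.unop.len].obj p.2) :
    (h.app m x).app p (a, b) = (yonedaEquiv h).app p
      (a, (SSet.stdSimplex.map (SSet.stdSimplex.objEquiv x)).app p.2 b) := by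
  rw [← yonedaEquiv.symm_apply_apply h, ← SSet.stdSimplex.map_objEquiv_op_apply,
    Equiv.apply_symm_apply]
  rfl

lemma yonedaEquiv_app_vertex {A : SSet.{0}} {n : ℕ} (h : Δ[n] ⟶ under A X.carrier)
    (v : Δ[n] _⦋0⦌) (a : A _⦋1⦌) :
    (yonedaEquiv h).app (op ⦋1⦌, op ⦋0⦌) (a, v) =
      (h.app _ v).app (op ⦋1⦌, op ⦋0⦌) (a, idSimplex ⦋0⦌) := by
  rw [app_app_eq_yonedaEquiv_app]
  congr
  show v = SSet.stdSimplex.objEquiv.symm (SSet.stdSimplex.objEquiv (idSimplex ⦋0⦌) ≫ _)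
  rw [idSimplex, Equiv.apply_symm_apply, Category.id_comp, Equiv.symm_apply_apply]

instance mUnderIncl_mono (A : MSSet) : Mono (mUnderIncl A X) := by
  have (n : SimplexCategoryᵒᵖ) : Mono ((mUnderIncl A X).app n) :=
    (mono_iff_injective _).2 Subtype.val_injective
  exact NatTrans.mono_of_mono_app _

lemma exists_lift_mUnderIncl_of_preservesMarking {A : MSSet} {n : ℕ}
    (h : Δ[n] ⟶ under A.carrier X.carrier) (hh : PreservesMarking (yonedaEquiv h)) :
    ∃ l : Δ[n] ⟶ mUnder A X, l ≫ mUnderIncl A X = h :=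
  ⟨{ app m := TypeCat.ofHom fun x =>
       ⟨h.app m x, fun a ha b => by rw [app_app_eq_yonedaEquiv_app]; exact hh a ha _⟩
     naturality m m' φ := by
       ext x : 3
       apply Subtype.ext
       exact NatTrans.naturality_apply h φ x }, rfl⟩

lemma mUnderPush_comp_mUnderIncl (A : MSSet) {Y : MBSSet} (f : X ⟶ Y) :
    mUnderPush A f ≫ mUnderIncl A Y = mUnderIncl A X ≫ underPush A.carrier f.1 := rfl

lemma mUnderWhisker_comp_mUnderIncl {A A' : MSSet} (u : A ⟶ A') :
    mUnderWhisker u X ≫ mUnderIncl A X = mUnderIncl A' X ≫ underWhisker u.1 X.carrier := rfl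

lemma mUnderIncl_comp_underGap {A A' : MSSet} (u : A ⟶ A') {Y : MBSSet} (f : X ⟶ Y) :
    mUnderIncl A' X ≫ underGap u.1 f.1 = mUnderGap u f ≫
      pullback.map _ _ _ _ (mUnderIncl A X) (mUnderIncl A' Y) (mUnderIncl A Y)
        (mUnderPush_comp_mUnderIncl A f) (mUnderWhisker_comp_mUnderIncl u) := by
  apply pullback.hom_ext
  · rw [Category.assoc, underGap, pullback.lift_fst, Category.assoc, pullback.lift_fst,
      mUnderGap, pullback.lift_fst_assoc]
    rfl
  · rw [Category.assoc, underGap, pullback.lift_snd, Category.assoc, pullback.lift_snd,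
      mUnderGap, pullback.lift_snd_assoc]
    rfl

end MarkedDivision

/-- if `f : X ⟶ Y` is a Reedy fibration between marked bisimplicial sets such
that the marking on `X` respects path components, and `u : A ⟶ A'` is a map of marked
simplicial sets whose underlying map is a monomorphism, then the gap map
`⟨u \\ f⟩ : A' \\ X ⟶ A \\ X ×_{A \\ Y} A' \\ Y` is a Kan fibration. -/
theorem marked_gap_map_is_kan_fibration {X Y : MBSSet} (f : X ⟶ Y)
    (hf : IsReedyFibration f.1) (hX : MarkingRespectsPathComponents X)
    {A A' : MSSet} (u : A ⟶ A') (hu : Mono u.1) :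
    IsKanFibration (mUnderGap u f) := by
  intro n i
  have : HasLiftingProperty Λ[n + 1, i].ι (underGap u.1 f.1) := hf u.1 hu n i
  refine HasLiftingProperty.of_mono_of_factors _ (mUnderIncl_comp_underGap u f)
    fun g h hgh => exists_lift_mUnderIncl_of_preservesMarking h ?_
  let v : Λ[n + 1, i].toSSet _⦋0⦌ := ⟨_, stdSimplex.const_mem_horn n i _⟩
  refine preservesMarking_of_vertex hX _ v.1 fun a ha => ?_
  have hv : h.app _ v.1 = (g.app _ v).1 := ConcreteCategory.congr_hom (NatTrans.congr_app hgh _) v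
  rw [yonedaEquiv_app_vertex, hv]
  exact (g.app _ v).2 a ha _

end Paper
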